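/- arXiv:1806.05702 — 3 statements merged into one kernel-verified Lean document; each statement's English description precedes it below -/
import Mathlib

section
/- For 0 < H < 1, the points t = 1/3 and t = 2/3 are the unique maximizers of the Takagi–Landsberg function x^H on [0,1]. -/
open Filter Finset Set MeasureTheory ProbabilityTheory

noncomputable def e00 (t : ℝ) : ℝ := max (min t (1 - t)) 0

noncomputable def fs (m : ℕ) (k : ℤ) (t : ℝ) : ℝ :=
  (2 : ℝ) ^ (-(m : ℝ) / 2) * e00 ((2 : ℝ) ^ m * t - (k : ℝ))

def IsSign (θ : ℕ → ℕ → ℝ) : Prop := ∀ m k, θ m k = 1 ∨ θ m k = -1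

noncomputable def tlTerm (H : ℝ) (θ : ℕ → ℕ → ℝ) (m : ℕ) (t : ℝ) : ℝ :=
  (2 : ℝ) ^ ((m : ℝ) * (1 / 2 - H)) *
    ∑ k ∈ Finset.range (2 ^ m), θ m k * fs m (k : ℤ) t

noncomputable def sPartial (H : ℝ) (θ : ℕ → ℕ → ℝ) (n : ℕ) (t : ℝ) : ℝ :=
  ∑ m ∈ Finset.range n, tlTerm H θ m t

def MemX (H : ℝ) (x : ℝ → ℝ) : Prop :=
  ∃ θ : ℕ → ℕ → ℝ, IsSign θ ∧ ∀ t : ℝ, x t = ∑' m : ℕ, tlTerm H θ m t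

noncomputable def xTL (H : ℝ) (t : ℝ) : ℝ := ∑' m : ℕ, tlTerm H (fun _ _ => 1) m t

noncomputable def dyadicSum (p : ℝ) (x : ℝ → ℝ) (n : ℕ) (t : ℝ) : ℝ :=
  ∑ k ∈ Finset.range (2 ^ n),
    if (k : ℝ) / 2 ^ n ≤ t then |x (((k : ℝ) + 1) / 2 ^ n) - x ((k : ℝ) / 2 ^ n)| ^ p else 0

noncomputable def nuFloor (h : ℝ) : ℤ := ⌊-(Real.logb 2 h)⌋

noncomputable def omegaH (H h : ℝ) : ℝ :=
  h * (2 : ℝ) ^ (((nuFloor h : ℝ) - 1) * (1 - H)) / ((2 : ℝ) ^ (1 - H) - 1) +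
    (2 : ℝ) ^ ((1 - (nuFloor h : ℝ)) * H) / (3 * (1 - (2 : ℝ) ^ (-H)))

/-!
On `[0, 1]`, `xTL H t = ∑ aᵐ d(2ᵐ t)` with `a = 2^(-H) ∈ (1/2, 1)` and `d` the distance to the
nearest integer. Since `d(2s) ≤ 1 - 2 d(s)`, the deviations `yₘ = d(2ᵐ t) - 1/3` satisfy
`yₘ₊₁ ≤ -2 yₘ`. Such a sequence has `∑ aᵐ yₘ ≤ 0`: a nonpositive `y₀` can be dropped, and a
positive one is outweighed by the next term, `y₀ + a y₁ ≤ (1 - 2a) y₀ < 0`; either way the sum is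
at most `a` times a sum of the same kind, hence at most `aⁿ` times a fixed bound for every `n`.
The same two cases make the sum negative unless `y₀ = 0`, i.e. `d(t) = 1/3`, i.e.
`t ∈ {1/3, 2/3}`, while `d(2ᵐ t) = 1/3` for all `m` there, so the bound `1/(3(1-a))` is attained.
-/

section WeightedSum

variable {a C : ℝ} {y : ℕ → ℝ}

lemma summable_pow_mul_of_abs_le (ha0 : 0 ≤ a) (ha1 : a < 1) (hy : ∀ m, |y m| ≤ C) :
    Summable fun m => a ^ m * y m :=
  .of_norm_bounded ((summable_geometric_of_lt_one ha0 ha1).mul_right C) fun m => by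
    rw [norm_mul, norm_pow, Real.norm_of_nonneg ha0]
    exact mul_le_mul_of_nonneg_left (hy m) (by positivity)

lemma tsum_pow_mul_le_of_abs_le (ha0 : 0 ≤ a) (ha1 : a < 1) (hy : ∀ m, |y m| ≤ C) :
    ∑' m, a ^ m * y m ≤ C / (1 - a) :=
  calc ∑' m, a ^ m * y m ≤ ∑' m, a ^ m * C :=
        (summable_pow_mul_of_abs_le ha0 ha1 hy).tsum_le_tsum
          (fun m => mul_le_mul_of_nonneg_left ((le_abs_self _).trans (hy m)) (by positivity))
          ((summable_geometric_of_lt_one ha0 ha1).mul_right C)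
    _ = C / (1 - a) := by rw [tsum_mul_right, tsum_geometric_of_lt_one ha0 ha1, inv_mul_eq_div]

lemma tsum_pow_mul_eq_add (ha0 : 0 ≤ a) (ha1 : a < 1) (hy : ∀ m, |y m| ≤ C) :
    ∑' m, a ^ m * y m = y 0 + a * ∑' m, a ^ m * y (m + 1) := by
  rw [(summable_pow_mul_of_abs_le ha0 ha1 hy).tsum_eq_zero_add, ← tsum_mul_left]
  simp only [pow_zero, one_mul, pow_succ', mul_assoc]

lemma tsum_pow_mul_le_pow_mul (ha : 1 / 2 < a) (ha1 : a < 1) (hy : ∀ m, |y m| ≤ C)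
    (hrec : ∀ m, y (m + 1) ≤ -2 * y m) (n : ℕ) :
    ∑' m, a ^ m * y m ≤ a ^ n * (C / (1 - a)) := by
  have ha0 : 0 ≤ a := by linarith
  induction n generalizing y with
  | zero => simpa using tsum_pow_mul_le_of_abs_le ha0 ha1 hy
  | succ n ih =>
    set K := a ^ n * (C / (1 - a))
    have hK : 0 ≤ K :=
      mul_nonneg (pow_nonneg ha0 n) (div_nonneg ((abs_nonneg _).trans (hy 0)) (by linarith))
    have hpow : a ^ (n + 1) * (C / (1 - a)) = a * K := by ring
    rw [hpow, tsum_pow_mul_eq_add ha0 ha1 hy]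
    rcases le_or_gt (y 0) 0 with h0 | h0
    · have htail : a * ∑' m, a ^ m * y (m + 1) ≤ a * K :=
        mul_le_mul_of_nonneg_left (ih (fun m => hy _) (fun m => hrec _)) ha0
      linarith
    · rw [tsum_pow_mul_eq_add ha0 ha1 (fun m => hy (m + 1))]
      have h1 : a * y (0 + 1) ≤ a * (-2 * y 0) := mul_le_mul_of_nonneg_left (hrec 0) ha0
      have htail : a * ∑' m, a ^ m * y (m + 1 + 1) ≤ a * K :=
        mul_le_mul_of_nonneg_left (ih (y := fun m => y (m + 2)) (fun m => hy _) (fun m => hrec _))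
          ha0
      have hfirst : 0 ≤ (2 * a - 1) * y 0 := mul_nonneg (by linarith) h0.le
      nlinarith [mul_le_of_le_one_left (mul_nonneg ha0 hK) ha1.le]

lemma tsum_pow_mul_nonpos (ha : 1 / 2 < a) (ha1 : a < 1) (hy : ∀ m, |y m| ≤ C)
    (hrec : ∀ m, y (m + 1) ≤ -2 * y m) : ∑' m, a ^ m * y m ≤ 0 := by
  have hlim : Tendsto (fun n : ℕ => a ^ n * (C / (1 - a))) atTop (nhds 0) := by
    simpa using (tendsto_pow_atTop_nhds_zero_of_lt_one (by linarith) ha1).mul_const (C / (1 - a))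
  exact ge_of_tendsto' hlim fun n => tsum_pow_mul_le_pow_mul ha ha1 hy hrec n

lemma tsum_pow_mul_neg (ha : 1 / 2 < a) (ha1 : a < 1) (hy : ∀ m, |y m| ≤ C)
    (hrec : ∀ m, y (m + 1) ≤ -2 * y m) (h0 : y 0 ≠ 0) : ∑' m, a ^ m * y m < 0 := by
  have ha0 : 0 ≤ a := by linarith
  rw [tsum_pow_mul_eq_add ha0 ha1 hy]
  rcases h0.lt_or_gt with h0 | h0
  · have htail : ∑' m, a ^ m * y (m + 1) ≤ 0 :=
      tsum_pow_mul_nonpos ha ha1 (fun m => hy (m + 1)) (fun m => hrec (m + 1))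
    nlinarith
  · rw [tsum_pow_mul_eq_add ha0 ha1 (fun m => hy (m + 1))]
    have htail : ∑' m, a ^ m * y (m + 1 + 1) ≤ 0 :=
      tsum_pow_mul_nonpos ha ha1 (fun m => hy (m + 2)) (fun m => hrec (m + 2))
    have h1 : y (0 + 1) ≤ -2 * y 0 := hrec 0
    nlinarith [mul_le_mul_of_nonneg_left h1 ha0, mul_nonpos_of_nonneg_of_nonpos ha0 htail]

end WeightedSum

lemma e00_of_mem_Icc {u : ℝ} (h0 : 0 ≤ u) (h1 : u ≤ 1) : e00 u = min u (1 - u) :=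
  max_eq_left (le_min h0 (by linarith))

lemma e00_of_nonpos {u : ℝ} (h : u ≤ 0) : e00 u = 0 :=
  max_eq_right (min_le_of_left_le h)

lemma e00_of_one_le {u : ℝ} (h : 1 ≤ u) : e00 u = 0 :=
  max_eq_right (min_le_of_right_le (by linarith))

noncomputable def distToInt (s : ℝ) : ℝ := e00 (Int.fract s)

lemma distToInt_eq_min (s : ℝ) : distToInt s = min (Int.fract s) (1 - Int.fract s) :=
  e00_of_mem_Icc (Int.fract_nonneg s) (Int.fract_lt_one s).le

lemma distToInt_mem_Icc (s : ℝ) : distToInt s ∈ Set.Icc 0 (1 / 2) := by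
  have h0 := Int.fract_nonneg s
  have h1 := Int.fract_lt_one s
  rw [distToInt_eq_min, Set.mem_Icc, min_le_iff]
  refine ⟨le_min h0 (by linarith), ?_⟩
  rcases le_total (Int.fract s) (1 / 2) with h | h
  · exact Or.inl h
  · exact Or.inr (by linarith)

lemma abs_distToInt_sub_third_le (s : ℝ) : |distToInt s - 1 / 3| ≤ 1 / 3 := by
  obtain ⟨h0, h1⟩ := distToInt_mem_Icc s
  rw [abs_le]
  constructor <;> linarith

lemma distToInt_natCast (n : ℕ) : distToInt n = 0 := by
  simp [distToInt, e00]

lemma distToInt_two_mul (s : ℝ) :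
    distToInt (2 * s) = min (2 * distToInt s) (1 - 2 * distToInt s) := by
  have h0 := Int.fract_nonneg s
  have h1 := Int.fract_lt_one s
  have hfract : Int.fract (2 * s) = Int.fract (2 * Int.fract s) := by
    rw [show 2 * s = ((2 * ⌊s⌋ : ℤ) : ℝ) + 2 * Int.fract s by push_cast [Int.fract]; ring,
      Int.fract_intCast_add]
  rw [distToInt, hfract, distToInt_eq_min]
  set u := Int.fract s
  rcases lt_or_ge u (1 / 2) with h | h
  · have hmin : min u (1 - u) = u := min_eq_left (by linarith)
    rw [hmin, Int.fract_eq_self.2 ⟨by linarith, by linarith⟩,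
      e00_of_mem_Icc (by linarith) (by linarith)]
  · have hmin : min u (1 - u) = 1 - u := min_eq_right (by linarith)
    rw [hmin, show 2 * u = (2 * u - 1) + 1 by ring, Int.fract_add_one,
      Int.fract_eq_self.2 ⟨by linarith, by linarith⟩, e00_of_mem_Icc (by linarith) (by linarith),
      min_comm]
    ring_nf

lemma distToInt_two_pow_succ_mul_sub_third_le (t : ℝ) (m : ℕ) :
    distToInt (2 ^ (m + 1) * t) - 1 / 3 ≤ -2 * (distToInt (2 ^ m * t) - 1 / 3) := by
  rw [pow_succ', mul_assoc, distToInt_two_mul]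
  linarith [min_le_right (2 * distToInt (2 ^ m * t)) (1 - 2 * distToInt (2 ^ m * t))]

lemma distToInt_two_pow_mul_of_eq_third {t : ℝ} (h : distToInt t = 1 / 3) (m : ℕ) :
    distToInt (2 ^ m * t) = 1 / 3 := by
  induction m with
  | zero => simpa using h
  | succ m ih =>
    rw [pow_succ', mul_assoc, distToInt_two_mul, ih]
    norm_num

lemma distToInt_eq_third_iff {t : ℝ} (ht : t ∈ Set.Icc 0 1) :
    distToInt t = 1 / 3 ↔ t = 1 / 3 ∨ t = 2 / 3 := by
  rcases ht.2.eq_or_lt with rfl | h1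
  · norm_num [distToInt_eq_min]
  rw [distToInt_eq_min, Int.fract_eq_self.2 ⟨ht.1, h1⟩]
  constructor
  · intro h
    rcases min_choice t (1 - t) with h' | h' <;> rw [h'] at h
    · exact Or.inl h
    · exact Or.inr (by linarith)
  · rintro (rfl | rfl) <;> norm_num

lemma e00_sub_intCast (s : ℝ) (k : ℤ) :
    e00 (s - k) = if k = ⌊s⌋ then distToInt s else 0 := by
  split_ifs with hk
  · rw [hk]; rfl
  rcases lt_or_gt_of_ne hk with hk | hk
  · have : ((k + 1 : ℤ) : ℝ) ≤ s := Int.le_floor.1 (by omega)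
    push_cast at this
    exact e00_of_one_le (by linarith)
  · exact e00_of_nonpos (by linarith [Int.floor_lt.1 hk])

lemma sum_range_e00_sub {s : ℝ} {N : ℕ} (hs0 : 0 ≤ s) (hsN : s ≤ N) :
    ∑ k ∈ range N, e00 (s - ((k : ℤ) : ℝ)) = distToInt s := by
  have hfloor : ⌊s⌋ = (⌊s⌋₊ : ℤ) := (Int.natCast_floor_eq_floor hs0).symm
  simp_rw [e00_sub_intCast, hfloor, Nat.cast_inj, Finset.sum_ite_eq', Finset.mem_range]
  split_ifs with hlt
  · rfl
  · have hNs : (N : ℝ) ≤ s := (Nat.floor_le hs0).trans' (by exact_mod_cast not_lt.1 hlt)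
    rw [le_antisymm hsN hNs, distToInt_natCast]

noncomputable def takagiSum (a t : ℝ) : ℝ := ∑' m : ℕ, a ^ m * distToInt (2 ^ m * t)

lemma takagiSum_eq_add {a : ℝ} (ha0 : 0 ≤ a) (ha1 : a < 1) (t : ℝ) :
    takagiSum a t = 1 / (3 * (1 - a)) + ∑' m : ℕ, a ^ m * (distToInt (2 ^ m * t) - 1 / 3) := by
  have hdev := summable_pow_mul_of_abs_le ha0 ha1 fun m => abs_distToInt_sub_third_le (2 ^ m * t)
  have hgeom := (summable_geometric_of_lt_one ha0 ha1).mul_right (1 / 3)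
  have hsplit : ∀ m : ℕ, a ^ m * distToInt (2 ^ m * t)
      = a ^ m * (distToInt (2 ^ m * t) - 1 / 3) + a ^ m * (1 / 3) := fun m => by ring
  rw [takagiSum, tsum_congr hsplit, hdev.tsum_add hgeom, tsum_mul_right,
    tsum_geometric_of_lt_one ha0 ha1, add_comm, inv_mul_eq_div, div_div]

section TakagiSum

variable {a : ℝ} (ha : 1 / 2 < a) (ha1 : a < 1)
include ha ha1

lemma takagiSum_le (t : ℝ) : takagiSum a t ≤ 1 / (3 * (1 - a)) := by
  rw [takagiSum_eq_add (by linarith) ha1]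
  linarith [tsum_pow_mul_nonpos ha ha1 (fun m => abs_distToInt_sub_third_le (2 ^ m * t))
    (distToInt_two_pow_succ_mul_sub_third_le t)]

lemma takagiSum_eq_iff (t : ℝ) : takagiSum a t = 1 / (3 * (1 - a)) ↔ distToInt t = 1 / 3 := by
  rw [takagiSum_eq_add (by linarith) ha1, add_eq_left]
  constructor
  · intro h
    by_contra hne
    refine (tsum_pow_mul_neg ha ha1 (fun m => abs_distToInt_sub_third_le (2 ^ m * t))
      (distToInt_two_pow_succ_mul_sub_third_le t) ?_).ne h
    simpa [sub_eq_zero] using hne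
  · intro h
    simp [distToInt_two_pow_mul_of_eq_third h]

end TakagiSum

lemma tlTerm_const_one {t : ℝ} (ht : t ∈ Set.Icc 0 1) (H : ℝ) (m : ℕ) :
    tlTerm H (fun _ _ => 1) m t = ((2 : ℝ) ^ (-H)) ^ m * distToInt (2 ^ m * t) := by
  have h2m : (0 : ℝ) < 2 ^ m := by positivity
  have hscale : (2 : ℝ) ^ ((m : ℝ) * (1 / 2 - H)) * 2 ^ (-(m : ℝ) / 2) = (2 ^ (-H)) ^ m := by
    rw [← Real.rpow_add two_pos, ← Real.rpow_natCast, ← Real.rpow_mul zero_le_two]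
    ring_nf
  simp only [tlTerm, fs, one_mul, ← Finset.mul_sum]
  rw [sum_range_e00_sub (mul_nonneg h2m.le ht.1) (by push_cast; nlinarith [ht.2]), ← mul_assoc,
    hscale]

lemma xTL_eq_takagiSum {t : ℝ} (ht : t ∈ Set.Icc 0 1) (H : ℝ) :
    xTL H t = takagiSum ((2 : ℝ) ^ (-H)) t :=
  tsum_congr fun m => tlTerm_const_one ht H m

lemma two_rpow_neg_mem_Ioo {H : ℝ} (hH : H ∈ Set.Ioo 0 1) :
    (2 : ℝ) ^ (-H) ∈ Set.Ioo (1 / 2) 1 := by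
  refine ⟨?_, Real.rpow_lt_one_of_one_lt_of_neg one_lt_two (by linarith [hH.1])⟩
  have h := Real.rpow_lt_rpow_of_exponent_lt one_lt_two (show (-1 : ℝ) < -H by linarith [hH.2])
  rwa [Real.rpow_neg_one, ← one_div] at h

theorem stmt3 (H : ℝ) (hH : H ∈ Set.Ioo (0:ℝ) 1) :
    {t : ℝ | t ∈ Set.Icc (0:ℝ) 1 ∧ ∀ s ∈ Set.Icc (0:ℝ) 1, xTL H s ≤ xTL H t}
      = {1/3, 2/3} := by
  obtain ⟨ha, ha1⟩ := two_rpow_neg_mem_Ioo hH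
  have hle : ∀ t ∈ Set.Icc (0 : ℝ) 1, xTL H t ≤ 1 / (3 * (1 - 2 ^ (-H))) := fun t ht =>
    (xTL_eq_takagiSum ht H).trans_le (takagiSum_le ha ha1 t)
  have hmax : ∀ t ∈ Set.Icc (0 : ℝ) 1,
      (xTL H t = 1 / (3 * (1 - 2 ^ (-H))) ↔ t = 1 / 3 ∨ t = 2 / 3) := fun t ht => by
    rw [xTL_eq_takagiSum ht, takagiSum_eq_iff ha ha1, distToInt_eq_third_iff ht]
  have hthird : (1 / 3 : ℝ) ∈ Set.Icc 0 1 := by norm_num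
  ext t
  simp only [Set.mem_ofPred_eq, Set.mem_insert_iff, Set.mem_singleton_iff]
  constructor
  · rintro ⟨ht, hge⟩
    refine (hmax t ht).1 (le_antisymm (hle t ht) ?_)
    exact ((hmax _ hthird).2 (Or.inl rfl)).symm.trans_le (hge _ hthird)
  · intro h
    have ht : t ∈ Set.Icc (0 : ℝ) 1 := by rcases h with rfl | rfl <;> norm_num
    exact ⟨ht, fun s hs => ((hmax t ht).2 h).symm ▸ hle s hs⟩
end

section
/- For 0 < H < 1, define ν(h) = ⌊−log₂ h⌋ and ω_H(h) = h·2^{(ν(h)−1)(1−H)}/(2^{1−H}−1) + 2^{(1−ν(h))H}/(3(1−2^{−H})). Then for all h ∈ [0,1) and t ∈ [0,1−h], the Takagi–Landsberg function satisfies |x^H(t+h) − x^H(t)| ≤ ω_H(h). -/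
/-!
On `[0, 1]` the tents of level `m` add up to the distance `d (2 ^ m t)` to the nearest integer,
so `x^H (t) = ∑ c ^ m d (2 ^ m t)` with `c = 2 ^ (-H) ∈ [1/2, 1)`. Split the series after
`M = ν - 1` terms (none if `ν ≤ 1`). As `d` is 1-Lipschitz, the head moves by at most
`∑_{m < M} (2c) ^ m h ≤ h 2 ^ ((ν - 1)(1 - H)) / (2 ^ (1 - H) - 1)`. The tail is `c ^ M` times
the same series at `2 ^ M t`, whose values lie in `[0, 1 / (3 (1 - c))]`: with `d_m = d (2 ^ m s)`,
`d_{m+1} = 1 - 2 d_m` whenever `d_m ≥ 1/3`, so every positive excess `d_m - 1/3` is followed by a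
negative one twice as large, and as `c ≥ 1/2` the weighted excesses `∑ c ^ m (d_m - 1/3)` have
nonpositive partial sums.
-/

open Filter Finset Set MeasureTheory ProbabilityTheory

section NearestInt

variable {α : Type*} [Field α] [LinearOrder α] [IsStrictOrderedRing α] [FloorRing α]

def distInt (x : α) : α := |x - round x|

lemma distInt_nonneg (x : α) : 0 ≤ distInt x := abs_nonneg _

lemma distInt_le_half (x : α) : distInt x ≤ 1 / 2 := abs_sub_round x

lemma distInt_le_abs_sub_intCast (x : α) (n : ℤ) : distInt x ≤ |x - n| := round_le x n

lemma distInt_eq_abs_sub_of_le_half {x : α} {n : ℤ} (h : |x - n| ≤ 1 / 2) :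
    distInt x = |x - n| := by
  refine le_antisymm (distInt_le_abs_sub_intCast x n) ?_
  rcases eq_or_ne (round x) n with hn | hn
  · rw [distInt, hn]
  · have hsep : (1 : α) ≤ |(n : α) - round x| := by
      exact_mod_cast Int.one_le_abs (sub_ne_zero.mpr (Ne.symm hn))
    have htri : |(n : α) - round x| ≤ |x - n| + distInt x := by
      rw [distInt, abs_sub_comm x]; exact abs_sub_le _ _ _
    linarith

lemma distInt_sub_intCast (x : α) (n : ℤ) : distInt (x - n) = distInt x := by
  rw [distInt, distInt, round_sub_intCast, Int.cast_sub, sub_sub_sub_cancel_right]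

lemma abs_distInt_sub_distInt_le (x y : α) : |distInt x - distInt y| ≤ |x - y| := by
  have key : ∀ a b : α, distInt a - distInt b ≤ |a - b| := fun a b => by
    have hround := distInt_le_abs_sub_intCast a (round b)
    have htri := abs_sub_le a b (round b)
    simp only [distInt] at *; linarith
  exact abs_sub_le_iff.mpr ⟨key x y, by rw [abs_sub_comm]; exact key y x⟩

lemma distInt_two_mul {x : α} (h : 1 / 3 ≤ distInt x) : distInt (2 * x) = 1 - 2 * distInt x := by
  have hhalf := distInt_le_half x
  set δ := x - round x
  have hd : distInt x = |δ| := rfl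
  rcases le_total 0 δ with hδ | hδ
  · rw [hd, abs_of_nonneg hδ] at h hhalf ⊢
    have hn : 2 * x - ((2 * round x + 1 : ℤ) : α) = 2 * δ - 1 := by push_cast; ring
    rw [distInt_eq_abs_sub_of_le_half (by rw [hn, abs_le]; constructor <;> linarith), hn,
      abs_of_nonpos (by linarith)]
    ring
  · rw [hd, abs_of_nonpos hδ] at h hhalf ⊢
    have hn : 2 * x - ((2 * round x - 1 : ℤ) : α) = 2 * δ + 1 := by push_cast; ring
    rw [distInt_eq_abs_sub_of_le_half (by rw [hn, abs_le]; constructor <;> linarith), hn,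
      abs_of_nonneg (by linarith)]
    ring

end NearestInt

lemma e00_eq_zero_of_nonpos {y : ℝ} (hy : y ≤ 0) : e00 y = 0 :=
  max_eq_right ((min_le_left _ _).trans hy)

lemma e00_eq_zero_of_one_le {y : ℝ} (hy : 1 ≤ y) : e00 y = 0 :=
  max_eq_right ((min_le_right _ _).trans (by linarith))

lemma e00_eq_distInt {y : ℝ} (h0 : 0 ≤ y) (h1 : y ≤ 1) : e00 y = distInt y := by
  rw [e00, max_eq_left (le_min h0 (by linarith))]
  rcases le_total y (1 / 2) with hy | hy
  · rw [min_eq_left (by linarith), distInt_eq_abs_sub_of_le_half (n := 0)] <;>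
      simp only [Int.cast_zero, sub_zero, abs_of_nonneg h0, hy]
  · rw [min_eq_right (by linarith), distInt_eq_abs_sub_of_le_half (n := 1)] <;>
      simp only [Int.cast_one, abs_of_nonpos (sub_nonpos.mpr h1), neg_sub]
    linarith

lemma sum_range_e00_sub_eq_distInt (n : ℕ) {s : ℝ} (h0 : 0 ≤ s) (hn : s ≤ n) :
    ∑ k ∈ range n, e00 (s - k) = distInt s := by
  induction n generalizing s with
  | zero => simp [le_antisymm (by exact_mod_cast hn) h0, distInt]
  | succ n ih =>
    rw [sum_range_succ']
    push_cast at hn ⊢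
    rcases le_total s 1 with hs | hs
    · have hk (k : ℕ) : s - (k + 1) ≤ 0 := by linarith [k.cast_nonneg (α := ℝ)]
      rw [sum_eq_zero fun k _ => e00_eq_zero_of_nonpos (hk k), zero_add, sub_zero,
        e00_eq_distInt h0 hs]
    · have hshift := distInt_sub_intCast s 1
      rw [Int.cast_one] at hshift
      rw [sub_zero, e00_eq_zero_of_one_le hs, add_zero, ← hshift,
        ← ih (by linarith) (by linarith)]
      simp only [sub_add_eq_sub_sub_swap]

lemma sum_range_succ_pow_mul_le {c : ℝ} (hc : 1 / 2 ≤ c) {u : ℕ → ℝ}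
    (hu : ∀ n, 0 < u n → u (n + 1) ≤ -2 * u n) (n : ℕ) :
    ∑ m ∈ range (n + 1), c ^ m * u m ≤ c ^ n * max (u n) 0 := by
  have hc0 : 0 ≤ c := by linarith
  induction n with
  | zero => simp
  | succ n ih =>
    rw [sum_range_succ]
    have hmax : 0 ≤ c ^ (n + 1) * max (u (n + 1)) 0 := by positivity
    have hle : c ^ (n + 1) * u (n + 1) ≤ c ^ (n + 1) * max (u (n + 1)) 0 := by gcongr; simp
    rcases le_or_gt (u n) 0 with hn | hn
    · rw [max_eq_right hn, mul_zero] at ih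
      linarith
    · rw [max_eq_left hn.le] at ih
      have hnext : c ^ (n + 1) * u (n + 1) ≤ c ^ (n + 1) * (-2 * u n) := by gcongr; exact hu n hn
      have hcancel : c ^ n * u n + c ^ (n + 1) * (-2 * u n) ≤ 0 := by
        have hpos : 0 ≤ c ^ n * u n := by positivity
        nlinarith [pow_succ c n]
      linarith

lemma tsum_pow_mul_nonpos_s7 {c B : ℝ} (hc : 1 / 2 ≤ c) (hc1 : c < 1) {u : ℕ → ℝ}
    (hu : ∀ n, 0 < u n → u (n + 1) ≤ -2 * u n) (hB : ∀ n, u n ≤ B)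
    (hsum : Summable fun m => c ^ m * u m) :
    ∑' m, c ^ m * u m ≤ 0 := by
  have hc0 : 0 ≤ c := by linarith
  have hpartial : Tendsto (fun n => ∑ m ∈ range (n + 1), c ^ m * u m) atTop
      (nhds (∑' m, c ^ m * u m)) :=
    hsum.hasSum.tendsto_sum_nat.comp (tendsto_add_atTop_nat 1)
  have hbound : Tendsto (fun n => c ^ n * max B 0) atTop (nhds 0) := by
    simpa using (tendsto_pow_atTop_nhds_zero_of_lt_one hc0 hc1).mul_const (max B 0)
  refine le_of_tendsto_of_tendsto' hpartial hbound fun n => ?_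
  exact (sum_range_succ_pow_mul_le hc hu n).trans (by gcongr; exact hB n)

noncomputable def takagiSeries (c s : ℝ) : ℝ :=
  ∑' m : ℕ, c ^ m * distInt ((2 : ℝ) ^ m * s)

section TakagiSeries

variable {c : ℝ}

lemma summable_takagiSeries (hc0 : 0 ≤ c) (hc1 : c < 1) (s : ℝ) :
    Summable fun m : ℕ => c ^ m * distInt ((2 : ℝ) ^ m * s) := by
  refine (summable_geometric_of_lt_one hc0 hc1).of_nonneg_of_le
    (fun m => mul_nonneg (pow_nonneg hc0 m) (distInt_nonneg _)) fun m => ?_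
  have hhalf := distInt_le_half ((2 : ℝ) ^ m * s)
  calc c ^ m * distInt ((2 : ℝ) ^ m * s) ≤ c ^ m * 1 := by gcongr; linarith
    _ = c ^ m := mul_one _

lemma takagiSeries_nonneg (hc0 : 0 ≤ c) (s : ℝ) : 0 ≤ takagiSeries c s :=
  tsum_nonneg fun m => mul_nonneg (pow_nonneg hc0 m) (distInt_nonneg _)

lemma takagiSeries_eq_sum_add (hc0 : 0 ≤ c) (hc1 : c < 1) (M : ℕ) (s : ℝ) :
    takagiSeries c s = ∑ m ∈ range M, c ^ m * distInt ((2 : ℝ) ^ m * s)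
      + c ^ M * takagiSeries c ((2 : ℝ) ^ M * s) := by
  rw [takagiSeries, ← (summable_takagiSeries hc0 hc1 s).sum_add_tsum_nat_add M, takagiSeries,
    ← tsum_mul_left]
  congr 2 with m
  rw [pow_add, pow_add, mul_assoc (2 ^ m)]
  ring

lemma takagiSeries_le (hc : 1 / 2 ≤ c) (hc1 : c < 1) (s : ℝ) :
    takagiSeries c s ≤ 1 / (3 * (1 - c)) := by
  have hc0 : 0 ≤ c := by linarith
  set u : ℕ → ℝ := fun m => distInt ((2 : ℝ) ^ m * s) - 1 / 3
  have hgeom := summable_geometric_of_lt_one hc0 hc1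
  have hrec : ∀ n, 0 < u n → u (n + 1) ≤ -2 * u n := fun n hn => by
    have hdouble := distInt_two_mul (x := (2 : ℝ) ^ n * s) (by simp only [u] at hn; linarith)
    simp only [u, pow_succ, mul_comm _ (2 : ℝ), mul_assoc, hdouble]
    linarith
  have hu_le : ∀ n, u n ≤ 1 / 6 := fun n => by
    simp only [u]; linarith [distInt_le_half ((2 : ℝ) ^ n * s)]
  have hsum : Summable fun m => c ^ m * u m := by
    simpa only [u, mul_sub] using (summable_takagiSeries hc0 hc1 s).sub (hgeom.mul_right (1 / 3))
  have hsplit : takagiSeries c s = ∑' m, c ^ m * u m + ∑' m : ℕ, c ^ m * (1 / 3) := by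
    rw [← hsum.tsum_add (hgeom.mul_right _), takagiSeries]
    congr 1 with m
    simp only [u]; ring
  rw [hsplit, tsum_mul_right, tsum_geometric_of_lt_one hc0 hc1]
  have hneg := tsum_pow_mul_nonpos_s7 hc hc1 hrec hu_le hsum
  have hgeom_sum : (1 - c)⁻¹ * (1 / 3) = 1 / (3 * (1 - c)) := by field_simp
  linarith

lemma abs_takagiSeries_sub_le (hc : 1 / 2 ≤ c) (hc1 : c < 1) (M : ℕ) (a b : ℝ) :
    |takagiSeries c b - takagiSeries c a|
      ≤ (∑ m ∈ range M, (2 * c) ^ m) * |b - a| + c ^ M * (1 / (3 * (1 - c))) := by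
  have hc0 : 0 ≤ c := by linarith
  rw [takagiSeries_eq_sum_add hc0 hc1 M b, takagiSeries_eq_sum_add hc0 hc1 M a,
    add_sub_add_comm, ← sum_sub_distrib, ← mul_sub]
  refine (abs_add_le _ _).trans (add_le_add ?_ ?_)
  · refine (abs_sum_le_sum_abs _ _).trans ?_
    rw [sum_mul]
    refine sum_le_sum fun m _ => ?_
    have hlip : |distInt ((2 : ℝ) ^ m * b) - distInt (2 ^ m * a)| ≤ 2 ^ m * |b - a| := by
      calc _ ≤ |(2 : ℝ) ^ m * b - 2 ^ m * a| := abs_distInt_sub_distInt_le _ _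
        _ = 2 ^ m * |b - a| := by rw [← mul_sub, abs_mul, abs_of_nonneg (by positivity)]
    calc _ = c ^ m * |distInt ((2 : ℝ) ^ m * b) - distInt (2 ^ m * a)| := by
          rw [← mul_sub, abs_mul, abs_of_nonneg (pow_nonneg hc0 m)]
      _ ≤ c ^ m * (2 ^ m * |b - a|) := by gcongr
      _ = (2 * c) ^ m * |b - a| := by ring
  · rw [abs_mul, abs_of_nonneg (pow_nonneg hc0 M)]
    gcongr
    rw [abs_sub_le_iff]
    constructor <;> linarith [takagiSeries_le hc hc1 ((2 : ℝ) ^ M * a),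
      takagiSeries_le hc hc1 ((2 : ℝ) ^ M * b), takagiSeries_nonneg hc0 ((2 : ℝ) ^ M * a),
      takagiSeries_nonneg hc0 ((2 : ℝ) ^ M * b)]

end TakagiSeries

lemma tlTerm_one_eq (H : ℝ) (m : ℕ) {t : ℝ} (h0 : 0 ≤ t) (h1 : t ≤ 1) :
    tlTerm H (fun _ _ => 1) m t = ((2 : ℝ) ^ (-H)) ^ m * distInt ((2 : ℝ) ^ m * t) := by
  have hscale : (2 : ℝ) ^ ((m : ℝ) * (1 / 2 - H)) * (2 : ℝ) ^ (-(m : ℝ) / 2)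
      = ((2 : ℝ) ^ (-H)) ^ m := by
    rw [← Real.rpow_add two_pos, ← Real.rpow_natCast, ← Real.rpow_mul zero_le_two]
    ring_nf
  have htents :
      ∑ k ∈ range (2 ^ m), e00 ((2 : ℝ) ^ m * t - k) = distInt ((2 : ℝ) ^ m * t) :=
    sum_range_e00_sub_eq_distInt _ (by positivity)
      (by push_cast; nlinarith [pow_pos two_pos (M₀ := ℝ) m])
  simp only [tlTerm, fs, one_mul, Int.cast_natCast, ← mul_sum, htents, ← mul_assoc, hscale]

lemma xTL_eq_takagiSeries (H : ℝ) {t : ℝ} (h0 : 0 ≤ t) (h1 : t ≤ 1) :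
    xTL H t = takagiSeries ((2 : ℝ) ^ (-H)) t :=
  tsum_congr fun m => tlTerm_one_eq H m h0 h1

lemma geom_sum_range_toNat_le_rpow {r : ℝ} (hr : 1 < r) (n : ℤ) :
    ∑ m ∈ range n.toNat, r ^ m ≤ r ^ (n : ℝ) / (r - 1) := by
  rw [geom_sum_eq hr.ne']
  gcongr
  rcases le_or_gt n 0 with hn | hn
  · rw [Int.toNat_of_nonpos hn, pow_zero, sub_self]
    positivity
  · have hcast : ((n.toNat : ℕ) : ℝ) = n := by exact_mod_cast Int.toNat_of_nonneg hn.le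
    rw [← Real.rpow_natCast, hcast]
    linarith

lemma pow_toNat_le_rpow {c : ℝ} (hc0 : 0 < c) (hc1 : c ≤ 1) (n : ℤ) :
    c ^ n.toNat ≤ c ^ (n : ℝ) := by
  rw [← Real.rpow_natCast]
  exact Real.rpow_le_rpow_of_exponent_ge hc0 hc1 (by exact_mod_cast Int.self_le_toNat n)

theorem stmt7 (H : ℝ) (hH : H ∈ Set.Ioo (0:ℝ) 1) (h : ℝ) (hh : h ∈ Set.Ico (0:ℝ) 1)
    (t : ℝ) (ht : t ∈ Set.Icc 0 (1 - h)) :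
    |xTL H (t + h) - xTL H t| ≤ omegaH H h := by
  obtain ⟨hH0, hH1⟩ := hH
  obtain ⟨hh0, -⟩ := hh
  obtain ⟨ht0, ht1⟩ := ht
  set c : ℝ := (2 : ℝ) ^ (-H)
  set ν : ℤ := nuFloor h
  have hc : 1 / 2 ≤ c := by
    simpa [Real.rpow_neg_one] using
      Real.rpow_le_rpow_of_exponent_le one_le_two (by linarith : -1 ≤ -H)
  have hc1 : c < 1 := Real.rpow_lt_one_of_one_lt_of_neg one_lt_two (by linarith)
  have h2c : 2 * c = (2 : ℝ) ^ (1 - H) := by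
    rw [sub_eq_add_neg, Real.rpow_add two_pos, Real.rpow_one]
  have hr : 1 < 2 * c := by rw [h2c]; exact Real.one_lt_rpow one_lt_two (by linarith)
  have hsplit := abs_takagiSeries_sub_le hc hc1 (ν - 1).toNat t (t + h)
  rw [← xTL_eq_takagiSeries H ht0 (by linarith),
    ← xTL_eq_takagiSeries H (by linarith) (by linarith), add_sub_cancel_left,
    abs_of_nonneg hh0] at hsplit
  refine hsplit.trans (add_le_add ?_ ?_)
  · have hpow : (2 * c) ^ ((ν - 1 : ℤ) : ℝ) = (2 : ℝ) ^ (((ν : ℝ) - 1) * (1 - H)) := by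
      rw [h2c, ← Real.rpow_mul zero_le_two]; push_cast; ring_nf
    calc _ ≤ (2 * c) ^ ((ν - 1 : ℤ) : ℝ) / (2 * c - 1) * h := by
          gcongr; exact geom_sum_range_toNat_le_rpow hr _
      _ = _ := by rw [hpow, h2c]; ring
  · have hpow : c ^ ((ν - 1 : ℤ) : ℝ) = (2 : ℝ) ^ ((1 - (ν : ℝ)) * H) := by
      rw [← Real.rpow_mul zero_le_two]; push_cast; ring_nf
    calc _ ≤ c ^ ((ν - 1 : ℤ) : ℝ) * (1 / (3 * (1 - c))) := by
          gcongr; exact pow_toNat_le_rpow (by positivity) hc1.le _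
      _ = _ := by rw [hpow]; ring
end

section
/- For 0 < H < 1, every x ∈ 𝔛^H satisfies the uniform modulus of continuity bound |x(t+h) − x(t)| ≤ 2^{1−H} ω_H(h) for all h ∈ [0,1) and t ∈ [0,1−h]. -/
open Filter Finset Set MeasureTheory ProbabilityTheory

/-!
Split the series at the level `n = ν(h)`. Level `m` is `2^{-mH}` times a sum of disjoint tents of
slope `2^m`, so the first `n` levels move by at most `h (2^{n(1-H)} - 1) / (2^{1-H} - 1)`.
Level `m` is also at most `2^{-mH} d(2^m t)`, where `d` is the distance to the nearest integer, and
`d(u) + d(2u)/2 ≤ 1/2`. Adding these constraints with the nonnegative weights `w_{j+1}` solving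
`w_{j+1} + w_j / 2 = c^j`, `c = 2^{-H} ≥ 1/2`, bounds each tail by `2^{-nH} / (3 (1 - 2^{-H}))`,
the value at `t = 1/3`, where `d ≡ 1/3`.
-/

lemma e00_nonneg (s : ℝ) : 0 ≤ e00 s := le_max_right _ _

lemma e00_eq_zero_of_nonpos_s10 {s : ℝ} (hs : s ≤ 0) : e00 s = 0 :=
  max_eq_right (min_le_of_left_le hs)

lemma e00_eq_zero_of_one_le_s10 {s : ℝ} (hs : 1 ≤ s) : e00 s = 0 :=
  max_eq_right (min_le_of_right_le (by linarith))

lemma abs_e00_sub_e00_le (a b : ℝ) : |e00 a - e00 b| ≤ |a - b| := by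
  refine (abs_max_sub_max_le_abs _ _ _).trans ((abs_min_sub_min_le_max _ _ _ _).trans ?_)
  rw [show (1 : ℝ) - a - (1 - b) = -(a - b) by ring, abs_neg, max_self]

lemma e00_le_abs_sub_intCast (s : ℝ) (z : ℤ) : e00 s ≤ |s - z| := by
  rcases le_or_gt s 0 with hs | hs
  · rw [e00_eq_zero_of_nonpos_s10 hs]; exact abs_nonneg _
  rcases le_or_gt 1 s with hs' | hs'
  · rw [e00_eq_zero_of_one_le_s10 hs']; exact abs_nonneg _
  have he : e00 s = min s (1 - s) := max_eq_left (le_min hs.le (by linarith))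
  rw [he]
  rcases le_or_gt z 0 with hz | hz
  · have : (z : ℝ) ≤ 0 := by exact_mod_cast hz
    exact (min_le_left _ _).trans (by linarith [le_abs_self (s - z)])
  · have : (1 : ℝ) ≤ z := by exact_mod_cast hz
    exact (min_le_right _ _).trans (by linarith [neg_abs_le (s - z)])

lemma e00_sub_natCast_eq_zero {u : ℝ} {k : ℕ} (hk : (k : ℤ) ≠ ⌊u⌋) : e00 (u - k) = 0 := by
  rcases lt_or_gt_of_ne hk with h | h
  · apply e00_eq_zero_of_one_le_s10
    have : (k : ℝ) + 1 ≤ ⌊u⌋ := by exact_mod_cast Int.add_one_le_of_lt h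
    linarith [Int.floor_le u]
  · apply e00_eq_zero_of_nonpos_s10
    have : (⌊u⌋ : ℝ) + 1 ≤ k := by exact_mod_cast Int.add_one_le_of_lt h
    linarith [Int.lt_floor_add_one u]

lemma abs_sum_mul_e00_sub_le {θ : ℕ → ℝ} (hθ : ∀ k, |θ k| ≤ 1) (N : ℕ) (u : ℝ) :
    |∑ k ∈ range N, θ k * e00 (u - k)| ≤ |u - round u| := by
  set a := ⌊u⌋.toNat
  have hvanish : ∀ k ∈ range N, θ k * e00 (u - k) = if k = a then θ a * e00 (u - a) else 0 := by
    intro k _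
    split_ifs with hk
    · rw [hk]
    · rw [e00_sub_natCast_eq_zero (fun h => hk (by rw [show a = k by simp [a, ← h]])),
        mul_zero]
  rw [sum_congr rfl hvanish, sum_ite_eq']
  calc |if a ∈ range N then θ a * e00 (u - a) else 0| ≤ |θ a * e00 (u - a)| := by
        split_ifs <;> simp only [abs_zero, abs_nonneg, le_refl]
    _ ≤ e00 (u - a) := by
        rw [abs_mul, abs_of_nonneg (e00_nonneg _)]
        exact mul_le_of_le_one_left (e00_nonneg _) (hθ a)
    _ ≤ |u - a - ((round u - a : ℤ) : ℝ)| := e00_le_abs_sub_intCast _ _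
    _ = |u - round u| := by push_cast; ring_nf

lemma e00_min_max (s : ℝ) : e00 (min (max s 0) 1) = e00 s := by
  rcases le_total s 0 with h | h
  · rw [max_eq_right h, min_eq_left zero_le_one, e00_eq_zero_of_nonpos_s10 le_rfl,
      e00_eq_zero_of_nonpos_s10 h]
  rcases le_total s 1 with h' | h'
  · rw [max_eq_left h, min_eq_left h']
  · rw [max_eq_left h, min_eq_right h', e00_eq_zero_of_one_le_s10 le_rfl, e00_eq_zero_of_one_le_s10 h']

lemma abs_e00_sub_e00_le_of_le {a b : ℝ} (hab : a ≤ b) :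
    |e00 b - e00 a| ≤ min (max b 0) 1 - min (max a 0) 1 := by
  rw [← e00_min_max b, ← e00_min_max a]
  refine (abs_e00_sub_e00_le _ _).trans (abs_of_nonneg ?_).le
  exact sub_nonneg.2 (min_le_min_right _ (max_le_max_right _ hab))

lemma sum_range_min_max_sub_natCast (u : ℝ) (N : ℕ) :
    ∑ k ∈ range N, min (max (u - k) 0) 1 = min (max u 0) N := by
  induction N with
  | zero => simp
  | succ N ih =>
    rw [sum_range_succ, ih, Nat.cast_succ]
    have : (0 : ℝ) ≤ N := N.cast_nonneg
    simp only [max_def, min_def]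
    split_ifs <;> linarith

lemma abs_sum_mul_e00_sub_sub_le {θ : ℕ → ℝ} (hθ : ∀ k, |θ k| ≤ 1) (N : ℕ) {a b : ℝ}
    (hab : a ≤ b) :
    |∑ k ∈ range N, θ k * e00 (b - k) - ∑ k ∈ range N, θ k * e00 (a - k)| ≤ b - a := by
  rw [← sum_sub_distrib]
  calc _ ≤ ∑ k ∈ range N, |θ k * e00 (b - k) - θ k * e00 (a - k)| := abs_sum_le_sum_abs _ _
    _ ≤ ∑ k ∈ range N, (min (max (b - k) 0) 1 - min (max (a - k) 0) 1) := by
        gcongr with k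
        rw [← mul_sub, abs_mul]
        exact (mul_le_of_le_one_left (abs_nonneg _) (hθ k)).trans
          (abs_e00_sub_e00_le_of_le (by linarith))
    _ = min (max b 0) N - min (max a 0) N := by
        rw [sum_sub_distrib, sum_range_min_max_sub_natCast, sum_range_min_max_sub_natCast]
    _ ≤ b - a := by
        have : (0 : ℝ) ≤ N := N.cast_nonneg
        simp only [max_def, min_def]
        split_ifs <;> linarith

lemma IsSign.abs_le {θ : ℕ → ℕ → ℝ} (hθ : IsSign θ) (m k : ℕ) : |θ m k| ≤ 1 := by
  rcases hθ m k with h | h <;> simp [h]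

lemma tlTerm_eq (H : ℝ) (θ : ℕ → ℕ → ℝ) (m : ℕ) (t : ℝ) :
    tlTerm H θ m t =
      ((2 : ℝ) ^ (-H)) ^ m * ∑ k ∈ range (2 ^ m), θ m k * e00 (2 ^ m * t - k) := by
  have hscale : (2 : ℝ) ^ ((m : ℝ) * (1 / 2 - H)) * 2 ^ (-(m : ℝ) / 2) = (2 ^ (-H)) ^ m := by
    rw [← Real.rpow_add two_pos, ← Real.rpow_natCast, ← Real.rpow_mul zero_le_two]
    ring_nf
  simp only [tlTerm, fs, Int.cast_natCast, ← hscale, mul_sum]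
  exact Finset.sum_congr rfl fun k _ => by ring

lemma abs_tlTerm_le {H : ℝ} {θ : ℕ → ℕ → ℝ} (hθ : IsSign θ) (m : ℕ) (t : ℝ) :
    |tlTerm H θ m t| ≤ ((2 : ℝ) ^ (-H)) ^ m * |2 ^ m * t - round ((2 : ℝ) ^ m * t)| := by
  rw [tlTerm_eq, abs_mul, abs_of_nonneg (by positivity)]
  exact mul_le_mul_of_nonneg_left (abs_sum_mul_e00_sub_le (hθ.abs_le m) _ _) (by positivity)

lemma abs_tlTerm_add_sub_le {H : ℝ} {θ : ℕ → ℕ → ℝ} (hθ : IsSign θ) (m : ℕ) (t : ℝ) {h : ℝ}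
    (hh : 0 ≤ h) : |tlTerm H θ m (t + h) - tlTerm H θ m t| ≤ ((2 : ℝ) ^ (1 - H)) ^ m * h := by
  have hr : (2 : ℝ) ^ (1 - H) = 2 * 2 ^ (-H) := by
    rw [sub_eq_add_neg, Real.rpow_add two_pos, Real.rpow_one]
  have hlip := abs_sum_mul_e00_sub_sub_le (hθ.abs_le m) (2 ^ m)
    (by gcongr; linarith : (2 : ℝ) ^ m * t ≤ 2 ^ m * (t + h))
  rw [tlTerm_eq, tlTerm_eq, ← mul_sub, abs_mul, abs_of_nonneg (by positivity)]
  calc _ ≤ ((2 : ℝ) ^ (-H)) ^ m * (2 ^ m * h) :=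
        mul_le_mul_of_nonneg_left (hlip.trans_eq (by ring)) (by positivity)
    _ = _ := by rw [hr, mul_pow]; ring

lemma abs_sub_round_add_abs_two_mul_sub_round_le (u : ℝ) :
    |u - round u| + |2 * u - round (2 * u)| / 2 ≤ 1 / 2 := by
  have hd := abs_le.1 (abs_sub_round u)
  rcases le_total 0 (u - round u) with h | h
  · have h2 := round_le (2 * u) (2 * round u + 1)
    push_cast at h2
    rw [abs_of_nonneg h]
    rw [abs_of_nonpos (by linarith : 2 * u - (2 * round u + 1 : ℝ) ≤ 0)] at h2
    linarith
  · have h2 := round_le (2 * u) (2 * round u - 1)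
    push_cast at h2
    rw [abs_of_nonpos h]
    rw [abs_of_nonneg (by linarith : 0 ≤ 2 * u - (2 * round u - 1 : ℝ))] at h2
    linarith

/-- The solution of `w (j + 1) + w j / 2 = c ^ j` with `w 0 = 0`. -/
noncomputable def chainWeight (c : ℝ) (j : ℕ) : ℝ := (c ^ j - (-2⁻¹) ^ j) / (c + 2⁻¹)

section ChainWeight

variable {c : ℝ}

lemma chainWeight_zero (c : ℝ) : chainWeight c 0 = 0 := by simp [chainWeight]

lemma chainWeight_succ_add (hc : 0 ≤ c) (j : ℕ) :
    chainWeight c (j + 1) + chainWeight c j / 2 = c ^ j := by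
  unfold chainWeight
  field_simp
  ring

lemma chainWeight_nonneg (hc : 2⁻¹ ≤ c) (j : ℕ) : 0 ≤ chainWeight c j := by
  have : (-2⁻¹ : ℝ) ^ j ≤ c ^ j := calc
    (-2⁻¹ : ℝ) ^ j ≤ |(-2⁻¹ : ℝ) ^ j| := le_abs_self _
    _ = 2⁻¹ ^ j := by rw [abs_pow, abs_neg, abs_of_pos (by norm_num)]
    _ ≤ c ^ j := pow_le_pow_left₀ (by norm_num) hc j
  exact div_nonneg (sub_nonneg.2 this) (by linarith)

lemma hasSum_chainWeight_succ (hc : 0 ≤ c) (hc1 : c < 1) :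
    HasSum (fun j => chainWeight c (j + 1)) (2 / (3 * (1 - c))) := by
  have hgeom : HasSum (fun j : ℕ => c * c ^ j - -2⁻¹ * (-2⁻¹) ^ j)
      (c * (1 - c)⁻¹ - -2⁻¹ * (1 - -2⁻¹)⁻¹) :=
    ((hasSum_geometric_of_lt_one hc hc1).mul_left c).sub
      ((hasSum_geometric_of_abs_lt_one (by norm_num)).mul_left _)
  have hval : (c * (1 - c)⁻¹ - -2⁻¹ * (1 - -2⁻¹)⁻¹) / (c + 2⁻¹) = 2 / (3 * (1 - c)) := by
    have : 1 - c ≠ 0 := by linarith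
    field_simp
    ring
  have hfun : (fun j => chainWeight c (j + 1)) =
      fun j => (c * c ^ j - -2⁻¹ * (-2⁻¹) ^ j) / (c + 2⁻¹) :=
    funext fun j => by rw [chainWeight, pow_succ', pow_succ']
  rw [hfun, ← hval]
  exact hgeom.div_const _

lemma sum_range_pow_mul_add_chainWeight (hc : 0 ≤ c) (φ : ℕ → ℝ) (N : ℕ) :
    ∑ j ∈ range N, c ^ j * φ j + chainWeight c N * φ N / 2 =
      ∑ j ∈ range N, chainWeight c (j + 1) * (φ j + φ (j + 1) / 2) := by
  induction N with
  | zero => simp [chainWeight_zero]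
  | succ N ih =>
    rw [sum_range_succ, sum_range_succ, ← ih, ← chainWeight_succ_add hc N]
    ring

lemma sum_range_pow_mul_le_of_chain (hc : 2⁻¹ ≤ c) (hc1 : c < 1) {φ : ℕ → ℝ}
    (hφ : ∀ j, 0 ≤ φ j) (hchain : ∀ j, φ j + φ (j + 1) / 2 ≤ 1 / 2) (N : ℕ) :
    ∑ j ∈ range N, c ^ j * φ j ≤ 1 / (3 * (1 - c)) := by
  have hc0 : 0 ≤ c := by linarith
  have hw := chainWeight_nonneg hc
  calc ∑ j ∈ range N, c ^ j * φ j
      ≤ ∑ j ∈ range N, c ^ j * φ j + chainWeight c N * φ N / 2 := by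
        have := mul_nonneg (hw N) (hφ N)
        linarith
    _ = ∑ j ∈ range N, chainWeight c (j + 1) * (φ j + φ (j + 1) / 2) :=
        sum_range_pow_mul_add_chainWeight hc0 φ N
    _ ≤ ∑ j ∈ range N, chainWeight c (j + 1) * (1 / 2) := by
        gcongr with j
        · exact hw _
        · exact hchain j
    _ ≤ 2 / (3 * (1 - c)) * (1 / 2) :=
        sum_le_hasSum _ (fun j _ => by linarith [hw (j + 1)])
          ((hasSum_chainWeight_succ hc0 hc1).mul_right _)
    _ = 1 / (3 * (1 - c)) := by ring

end ChainWeight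

section Levels

variable {H : ℝ} {θ : ℕ → ℕ → ℝ}

lemma sum_range_abs_tlTerm_add_le (hθ : IsSign θ) (hH : H ∈ Set.Ioo (0 : ℝ) 1) (n : ℕ) (t : ℝ)
    (N : ℕ) :
    ∑ m ∈ range N, |tlTerm H θ (m + n) t| ≤ ((2 : ℝ) ^ (-H)) ^ n / (3 * (1 - 2 ^ (-H))) := by
  set c : ℝ := 2 ^ (-H)
  have hc : 2⁻¹ ≤ c := by
    rw [← Real.rpow_neg_one]
    exact Real.rpow_le_rpow_of_exponent_le one_le_two (by linarith [hH.2])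
  have hc1 : c < 1 := Real.rpow_lt_one_of_one_lt_of_neg one_lt_two (by linarith [hH.1])
  set φ : ℕ → ℝ := fun j => |2 ^ (j + n) * t - round ((2 : ℝ) ^ (j + n) * t)|
  have hchain : ∀ j, φ j + φ (j + 1) / 2 ≤ 1 / 2 := fun j => by
    have h2 : (2 : ℝ) ^ (j + 1 + n) * t = 2 * (2 ^ (j + n) * t) := by ring
    simp only [φ, h2]
    exact abs_sub_round_add_abs_two_mul_sub_round_le _
  calc ∑ m ∈ range N, |tlTerm H θ (m + n) t|
      ≤ ∑ m ∈ range N, c ^ n * (c ^ m * φ m) := by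
        gcongr with m
        exact (abs_tlTerm_le hθ _ t).trans_eq (by rw [pow_add]; ring)
    _ = c ^ n * ∑ m ∈ range N, c ^ m * φ m := by rw [mul_sum]
    _ ≤ c ^ n * (1 / (3 * (1 - c))) := by
        gcongr
        exact sum_range_pow_mul_le_of_chain hc hc1 (fun _ => abs_nonneg _) hchain N
    _ = c ^ n / (3 * (1 - c)) := by ring

lemma summable_tlTerm_add (hθ : IsSign θ) (hH : H ∈ Set.Ioo (0 : ℝ) 1) (n : ℕ) (t : ℝ) :
    Summable fun m => tlTerm H θ (m + n) t :=
  .of_norm (summable_of_sum_range_le (fun _ => norm_nonneg _)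
    (sum_range_abs_tlTerm_add_le hθ hH n t))

lemma abs_tsum_tlTerm_add_le (hθ : IsSign θ) (hH : H ∈ Set.Ioo (0 : ℝ) 1) (n : ℕ) (t : ℝ) :
    |∑' m, tlTerm H θ (m + n) t| ≤ ((2 : ℝ) ^ (-H)) ^ n / (3 * (1 - 2 ^ (-H))) :=
  (norm_tsum_le_tsum_norm (summable_tlTerm_add hθ hH n t).norm).trans
    (Real.tsum_le_of_sum_range_le (fun _ => norm_nonneg _) (sum_range_abs_tlTerm_add_le hθ hH n t))

lemma abs_sum_range_tlTerm_add_sub_le (hθ : IsSign θ) (hH : H < 1) (n : ℕ) (t : ℝ) {h : ℝ}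
    (hh : 0 ≤ h) :
    |∑ m ∈ range n, (tlTerm H θ m (t + h) - tlTerm H θ m t)| ≤
      (((2 : ℝ) ^ (1 - H)) ^ n - 1) / (2 ^ (1 - H) - 1) * h := by
  have hr : (2 : ℝ) ^ (1 - H) ≠ 1 := (Real.one_lt_rpow one_lt_two (by linarith)).ne'
  calc _ ≤ ∑ m ∈ range n, |tlTerm H θ m (t + h) - tlTerm H θ m t| := abs_sum_le_sum_abs _ _
    _ ≤ ∑ m ∈ range n, ((2 : ℝ) ^ (1 - H)) ^ m * h := by
        gcongr with m
        exact abs_tlTerm_add_sub_le hθ m t hh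
    _ = _ := by rw [← sum_mul, geom_sum_eq hr]

end Levels

lemma nuFloor_nonneg {h : ℝ} (h0 : 0 ≤ h) (h1 : h ≤ 1) : 0 ≤ nuFloor h :=
  Int.floor_nonneg.2 (neg_nonneg.2 (Real.logb_nonpos one_lt_two h0 h1))

lemma rpow_one_sub_mul_omegaH (H : ℝ) {h : ℝ} {n : ℕ} (hn : nuFloor h = n) :
    (2 : ℝ) ^ (1 - H) * omegaH H h =
      ((2 : ℝ) ^ (1 - H)) ^ n / (2 ^ (1 - H) - 1) * h +
        2 * (((2 : ℝ) ^ (-H)) ^ n / (3 * (1 - 2 ^ (-H)))) := by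
  have hhead : (2 : ℝ) ^ (1 - H) * 2 ^ (((n : ℝ) - 1) * (1 - H)) = (2 ^ (1 - H)) ^ n := by
    rw [← Real.rpow_add two_pos, ← Real.rpow_natCast, ← Real.rpow_mul zero_le_two]
    ring_nf
  have htail : (2 : ℝ) ^ (1 - H) * 2 ^ ((1 - (n : ℝ)) * H) = 2 * (2 ^ (-H)) ^ n := by
    calc (2 : ℝ) ^ (1 - H) * 2 ^ ((1 - (n : ℝ)) * H) = 2 ^ (1 + -H * n) := by
          rw [← Real.rpow_add two_pos]; ring_nf
      _ = 2 * (2 ^ (-H)) ^ n := by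
          rw [Real.rpow_add two_pos, Real.rpow_one, Real.rpow_mul zero_le_two, Real.rpow_natCast]
  rw [omegaH, hn, Int.cast_natCast]
  linear_combination (h / (2 ^ (1 - H) - 1)) * hhead + (1 / (3 * (1 - 2 ^ (-H)))) * htail

theorem stmt10_general (H : ℝ) (hH : H ∈ Set.Ioo (0:ℝ) 1) (x : ℝ → ℝ) (hx : MemX H x)
    (h : ℝ) (hh : h ∈ Set.Ico (0:ℝ) 1) (t : ℝ) :
    |x (t + h) - x t| ≤ (2:ℝ) ^ (1 - H) * omegaH H h := by
  obtain ⟨θ, hθ, hx⟩ := hx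
  obtain ⟨n, hn⟩ := Int.eq_ofNat_of_zero_le (nuFloor_nonneg hh.1 hh.2.le)
  have hsplit : ∀ s, x s = ∑ m ∈ range n, tlTerm H θ m s + ∑' m, tlTerm H θ (m + n) s := by
    intro s
    rw [hx, ((summable_tlTerm_add hθ hH 0 s).congr fun m => by rw [add_zero]).sum_add_tsum_nat_add]
  have hhead := abs_sum_range_tlTerm_add_sub_le hθ hH.2 n t hh.1
  have hhead_le : (((2 : ℝ) ^ (1 - H)) ^ n - 1) / (2 ^ (1 - H) - 1) * h ≤
      ((2 : ℝ) ^ (1 - H)) ^ n / (2 ^ (1 - H) - 1) * h := by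
    have : (1 : ℝ) < 2 ^ (1 - H) := Real.one_lt_rpow one_lt_two (by linarith [hH.2])
    gcongr <;> linarith [hh.1]
  have htail₁ := abs_tsum_tlTerm_add_le hθ hH n (t + h)
  have htail₂ := abs_tsum_tlTerm_add_le hθ hH n t
  rw [rpow_one_sub_mul_omegaH H hn, hsplit, hsplit, ← sub_add_sub_comm, ← sum_sub_distrib]
  set T₁ := ∑' m, tlTerm H θ (m + n) (t + h)
  set T₂ := ∑' m, tlTerm H θ (m + n) t
  linarith [abs_add_le (∑ m ∈ range n, (tlTerm H θ m (t + h) - tlTerm H θ m t)) (T₁ - T₂),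
    abs_sub T₁ T₂]

theorem stmt10 (H : ℝ) (hH : H ∈ Set.Ioo (0:ℝ) 1) (x : ℝ → ℝ) (hx : MemX H x)
    (h : ℝ) (hh : h ∈ Set.Ico (0:ℝ) 1) (t : ℝ) (ht : t ∈ Set.Icc 0 (1 - h)) :
    |x (t + h) - x t| ≤ (2:ℝ) ^ (1 - H) * omegaH H h :=
  stmt10_general H hH x hx h hh t
end
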